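/- If D is a condensed integral domain, a is an irreducible element (atom) of D, and b, c are comaximal nonunits of D (i.e., (b,c) = D), then either (a,b) = D or (a,c) = D. -/
import Mathlib


/-- An integral domain is condensed if for every pair of nonzero ideals `I, J`,
the product `I*J` equals the set of products `{i*j : i ∈ I, j ∈ J}`. -/
def IsCondensed (D : Type*) [CommRing D] : Prop :=
  ∀ I J : Ideal D, I ≠ ⊥ → J ≠ ⊥ → ∀ x ∈ I * J, ∃ i ∈ I, ∃ j ∈ J, x = i * j

theorem stmt0 (D : Type*) [CommRing D] [IsDomain D] (hD : IsCondensed D)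
    (a b c : D) (ha : Irreducible a) (hb : ¬ IsUnit b) (hc : ¬ IsUnit c)
    (hbc : Ideal.span {b, c} = ⊤) :
    Ideal.span {a, b} = ⊤ ∨ Ideal.span {a, c} = ⊤ := by
  set I := Ideal.span ({a, b} : Set D) with hIdef
  set J := Ideal.span ({a, c} : Set D) with hJdef
  have haI : a ∈ I := Ideal.subset_span (by simp)
  have hbI : b ∈ I := Ideal.subset_span (by simp)
  have haJ : a ∈ J := Ideal.subset_span (by simp)
  have hcJ : c ∈ J := Ideal.subset_span (by simp)
  have ha0 : a ≠ 0 := ha.ne_zero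
  have hI0 : I ≠ ⊥ := fun h => ha0 (by simpa [h] using haI)
  have hJ0 : J ≠ ⊥ := fun h => ha0 (by simpa [h] using haJ)
  have h1 : (1 : D) ∈ Ideal.span ({b, c} : Set D) := by rw [hbc]; trivial
  rw [Ideal.mem_span_pair] at h1
  obtain ⟨r, s, hrs⟩ := h1
  have ha_eq : a = r * (b * a) + s * (a * c) := by linear_combination a * hrs.symm
  have haIJ : a ∈ I * J := by
    rw [ha_eq]
    exact add_mem (Ideal.mul_mem_left _ _ (Ideal.mul_mem_mul hbI haJ))
      (Ideal.mul_mem_left _ _ (Ideal.mul_mem_mul haI hcJ))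
  obtain ⟨i, hi, j, hj, hij⟩ := hD I J hI0 hJ0 a haIJ
  rcases ha.isUnit_or_isUnit hij with h | h
  · exact Or.inl (Ideal.eq_top_of_isUnit_mem _ hi h)
  · exact Or.inr (Ideal.eq_top_of_isUnit_mem _ hj h)
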